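/- arXiv:2501.14232 — 2 statements merged into one kernel-verified Lean document; each statement's English description precedes it below -/
import Mathlib

section
/- Let E be a real Hilbert space, β > 0, and let f : E → ℝ be nonnegative, convex, and β-smooth. Then for every λ > 0 and every z, w ∈ E, f(w) − (1+λ)·f(z) ≤ (1 + 1/λ)·(β/2)·‖w − z‖². (Lemma C.1.) -/
/-!
The descent lemma `f w ≤ f z + ⟪∇f z, w - z⟫ + β/2 ‖w - z‖²` at `w = z - β⁻¹ ∇f z`, together
with `f ≥ 0`, gives `‖∇f z‖² ≤ 2β f z`. Bounding the inner product in the descent lemma by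
Cauchy–Schwarz and then `‖∇f z‖ ‖w - z‖ ≤ λ f z + β/(2λ) ‖w - z‖²` (AM–GM) yields the claim.
-/

open InnerProductSpace Set

theorem le_add_fderiv_add_sq_of_lipschitz_fderiv {E : Type*} [NormedAddCommGroup E]
    [NormedSpace ℝ E] {f : E → ℝ} {f' : E → StrongDual ℝ E} {β : ℝ}
    (hf : ∀ x, HasFDerivAt f (f' x) x) (hf' : ∀ x y, ‖f' x - f' y‖ ≤ β * ‖x - y‖) (z w : E) :
    f w ≤ f z + f' z (w - z) + β / 2 * ‖w - z‖ ^ 2 := by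
  obtain ⟨v, rfl⟩ : ∃ v, w = z + v := ⟨w - z, (add_sub_cancel z w).symm⟩
  rw [add_sub_cancel_left]
  -- `φ 1 ≤ φ 0` is the claim, and the Lipschitz bound makes `φ` antitone on `t ≥ 0`.
  let φ : ℝ → ℝ := fun t ↦ f (z + t • v) - t * f' z v - β / 2 * t ^ 2 * ‖v‖ ^ 2
  have hφ : ∀ t, HasDerivAt φ (f' (z + t • v) v - f' z v - β * t * ‖v‖ ^ 2) t := by
    intro t
    have hline : HasDerivAt (fun s : ℝ ↦ z + s • v) v t := by
      simpa using ((hasDerivAt_id t).smul_const v).const_add z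
    refine ((((hf _).comp_hasDerivAt t hline).sub ((hasDerivAt_id t).mul_const (f' z v))).sub
      (((hasDerivAt_pow 2 t).const_mul (β / 2)).mul_const (‖v‖ ^ 2))).congr_deriv ?_
    simp only [one_mul, Nat.cast_ofNat]
    ring
  have hφ' : ∀ t ∈ interior (Ici (0 : ℝ)),
      f' (z + t • v) v - f' z v - β * t * ‖v‖ ^ 2 ≤ 0 := by
    rw [interior_Ici]
    intro t (ht : 0 < t)
    rw [sub_nonpos]
    calc f' (z + t • v) v - f' z v ≤ ‖f' (z + t • v) - f' z‖ * ‖v‖ :=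
          (Real.le_norm_self _).trans ((f' (z + t • v) - f' z).le_opNorm v)
      _ ≤ β * ‖t • v‖ * ‖v‖ := by
          gcongr; simpa using hf' (z + t • v) z
      _ = β * t * ‖v‖ ^ 2 := by rw [norm_smul, Real.norm_of_nonneg ht.le]; ring
  have hmono := antitoneOn_of_hasDerivWithinAt_nonpos (convex_Ici 0)
    (fun t _ ↦ (hφ t).continuousAt.continuousWithinAt) (fun t _ ↦ (hφ t).hasDerivWithinAt) hφ'
    self_mem_Ici (mem_Ici.2 zero_le_one) zero_le_one
  simp only [φ, one_smul, zero_smul, add_zero, one_mul, one_pow, zero_mul, ne_eq,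
    OfNat.ofNat_ne_zero, not_false_eq_true, zero_pow, mul_zero, sub_zero] at hmono
  linarith

section Gradient

variable {E : Type*} [NormedAddCommGroup E] [InnerProductSpace ℝ E] [CompleteSpace E]
  {f : E → ℝ} {g : E → E} {β : ℝ}

theorem le_add_inner_add_sq_of_lipschitz_gradient (hgrad : ∀ x, HasGradientAt f (g x) x)
    (hg : ∀ x y, ‖g x - g y‖ ≤ β * ‖x - y‖) (z w : E) :
    f w ≤ f z + ⟪g z, w - z⟫_ℝ + β / 2 * ‖w - z‖ ^ 2 :=
  le_add_fderiv_add_sq_of_lipschitz_fderiv hgrad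
    (fun x y ↦ by rw [← map_sub, LinearIsometryEquiv.norm_map]; exact hg x y) z w

theorem sq_norm_gradient_le_of_nonneg (hβ : 0 < β) (hf : ∀ x, 0 ≤ f x)
    (hgrad : ∀ x, HasGradientAt f (g x) x) (hg : ∀ x y, ‖g x - g y‖ ≤ β * ‖x - y‖) (z : E) :
    ‖g z‖ ^ 2 ≤ 2 * β * f z := by
  have h := (hf _).trans (le_add_inner_add_sq_of_lipschitz_gradient hgrad hg z (z - β⁻¹ • g z))
  rw [sub_sub_cancel_left, inner_neg_right, real_inner_smul_right, real_inner_self_eq_norm_sq,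
    norm_neg, norm_smul, Real.norm_of_nonneg (inv_nonneg.2 hβ.le)] at h
  have hsq : β / 2 * (β⁻¹ * ‖g z‖) ^ 2 = β⁻¹ * ‖g z‖ ^ 2 / 2 := by field_simp
  rw [hsq] at h
  rw [mul_comm 2 β, mul_assoc, ← inv_mul_le_iff₀ hβ]
  linarith

end Gradient

theorem stmt5_general {E : Type*} [NormedAddCommGroup E] [InnerProductSpace ℝ E] [CompleteSpace E]
    (f : E → ℝ) (g : E → E) (β : ℝ) (hβ : 0 < β)
    (hf0 : ∀ z, 0 ≤ f z)
    (hgrad : ∀ z, HasGradientAt f (g z) z)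
    (hglip : ∀ z w, ‖g z - g w‖ ≤ β * ‖z - w‖) :
    ∀ lam : ℝ, 0 < lam → ∀ z w : E,
      f w - (1 + lam) * f z ≤ (1 + 1 / lam) * (β / 2) * ‖w - z‖ ^ 2 := by
  intro lam hlam z w
  have hgz := sq_norm_gradient_le_of_nonneg hβ hf0 hgrad hglip z
  have hcross : ‖g z‖ * ‖w - z‖ ≤ lam * f z + β / (2 * lam) * ‖w - z‖ ^ 2 := by
    refine le_of_mul_le_mul_left ?_ (by positivity : 0 < 2 * lam * β)
    have hexpand : 2 * lam * β * (lam * f z + β / (2 * lam) * ‖w - z‖ ^ 2)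
        = lam ^ 2 * (2 * β * f z) + β ^ 2 * ‖w - z‖ ^ 2 := by field_simp
    rw [hexpand]
    nlinarith [sq_nonneg (lam * ‖g z‖ - β * ‖w - z‖), mul_le_mul_of_nonneg_left hgz (sq_nonneg lam)]
  calc f w - (1 + lam) * f z ≤ ⟪g z, w - z⟫_ℝ + β / 2 * ‖w - z‖ ^ 2 - lam * f z := by
        linarith [le_add_inner_add_sq_of_lipschitz_gradient hgrad hglip z w]
    _ ≤ ‖g z‖ * ‖w - z‖ + β / 2 * ‖w - z‖ ^ 2 - lam * f z := by
        gcongr; exact real_inner_le_norm _ _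
    _ ≤ β / (2 * lam) * ‖w - z‖ ^ 2 + β / 2 * ‖w - z‖ ^ 2 := by linarith
    _ = (1 + 1 / lam) * (β / 2) * ‖w - z‖ ^ 2 := by field_simp; ring

/-- Lemma C.1.
For a nonnegative, convex, `β`-smooth function `f` on a real Hilbert space,
`f w − (1+λ)·f z ≤ (1 + 1/λ)·(β/2)·‖w − z‖²` for all `λ > 0` and `z, w`. -/
theorem stmt5 {E : Type*} [NormedAddCommGroup E] [InnerProductSpace ℝ E] [CompleteSpace E]
    (f : E → ℝ) (g : E → E) (β : ℝ) (hβ : 0 < β)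
    (hf0 : ∀ z, 0 ≤ f z)
    (hconv : ConvexOn ℝ Set.univ f)
    (hgrad : ∀ z, HasGradientAt f (g z) z)
    (hglip : ∀ z w, ‖g z - g w‖ ≤ β * ‖z - w‖) :
    ∀ lam : ℝ, 0 < lam → ∀ z w : E,
      f w - (1 + lam) * f z ≤ (1 + 1 / lam) * (β / 2) * ‖w - z‖ ^ 2 :=
  stmt5_general f g β hβ hf0 hgrad hglip
end

section
/- Let E and F be real Hilbert spaces with E × F carrying the ℓ² product inner product, β > 0, σₓ, σᵤ ≥ 0, and let r : E × F → ℝ be nonnegative, convex, and β-smooth. Let f : E × F → E satisfy ‖f(x,u) − f(x',u)‖ ≤ σₓ·‖x − x'‖ and ‖f(x,u) − f(x,u')‖ ≤ σᵤ·‖u − u'‖ for all inputs. Let λ > λ₀ > 0, c > 1, and q, q' ≥ 0 satisfy c·σₓ²·q' + (1 + 1/λ₀)·(β/2) ≤ q. Suppose real numbers R, R† and points x, x† ∈ E, u, u† ∈ F satisfy R + q·‖x − x†‖² ≤ (1+λ)·R† and ‖u − u†‖² ≤ (λ − λ₀)·r(x†, u†) / ((1 + 1/λ₀)·(β/2) +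 (c/(c−1))·σᵤ²·q'). Then R + r(x, u) + q'·‖f(x, u) − f(x†, u†)‖² ≤ (1+λ)·(R† + r(x†, u†)). (Lemma D.1: a sufficient closeness condition to the prior action implies membership in the reservation-augmented safe set.) -/
/-!
For a nonnegative β-smooth `r`, the descent lemma at the gradient step gives
`‖∇r‖² ≤ 2β r`, and then the descent lemma with Young's inequality gives
`r z ≤ (1 + λ₀) r z† + (1 + 1/λ₀) (β/2) ‖z - z†‖²`. The two Lipschitz bounds and Young's
inequality with weight `c` give
`‖f x u - f x† u†‖² ≤ c σₓ² ‖x - x†‖² + c/(c-1) σᵤ² ‖u - u†‖²`.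
The condition on `q` absorbs all `‖x - x†‖²` terms into `q ‖x - x†‖²`, and the bound on
`‖u - u†‖²` absorbs all `‖u - u†‖²` terms into `(λ - λ₀) r z†`.
-/

open InnerProductSpace

lemma two_mul_le_mul_sq_add_sq_div {ε : ℝ} (hε : 0 < ε) (a b : ℝ) :
    2 * a * b ≤ ε * a ^ 2 + b ^ 2 / ε := by
  have h : 0 ≤ (ε * a - b) ^ 2 / ε := by positivity
  have e : (ε * a - b) ^ 2 / ε = ε * a ^ 2 + b ^ 2 / ε - 2 * a * b := by
    field_simp; ring
  linarith

lemma add_sq_le_mul_sq_add_div_sub_one_mul_sq {c : ℝ} (hc : 1 < c) (a b : ℝ) :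
    (a + b) ^ 2 ≤ c * a ^ 2 + c / (c - 1) * b ^ 2 := by
  have hc' : 0 < c - 1 := by linarith
  have h := two_mul_le_mul_sq_add_sq_div hc' a b
  have e : c / (c - 1) * b ^ 2 = b ^ 2 + b ^ 2 / (c - 1) := by field_simp; ring
  linarith

section Smooth

variable {H : Type*} [NormedAddCommGroup H] [InnerProductSpace ℝ H] [CompleteSpace H]
  {r : H → ℝ} {g : H → H} {β : ℝ}

lemma hasDerivAt_apply_add_smul (hgrad : ∀ z, HasGradientAt r (g z) z) (w v : H) (t : ℝ) :
    HasDerivAt (fun s : ℝ => r (w + s • v)) ⟪g (w + t • v), v⟫_ℝ t := by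
  have hline : HasDerivAt (fun s : ℝ => w + s • v) v t := by
    simpa using ((hasDerivAt_id t).smul_const v).const_add w
  simpa [Function.comp_def] using (hgrad (w + t • v)).hasFDerivAt.comp_hasDerivAt t hline

lemma descent_lemma (hgrad : ∀ z, HasGradientAt r (g z) z)
    (hglip : ∀ z w, ‖g z - g w‖ ≤ β * ‖z - w‖) (w z : H) :
    r z ≤ r w + ⟪g w, z - w⟫_ℝ + β / 2 * ‖z - w‖ ^ 2 := by
  set v := z - w
  -- `ψ` is `r` along the segment minus its claimed quadratic upper model.
  set ψ : ℝ → ℝ := fun t => r (w + t • v) - t * ⟪g w, v⟫_ℝ - β / 2 * ‖v‖ ^ 2 * t ^ 2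
  have hψ (t : ℝ) : HasDerivAt ψ (⟪g (w + t • v) - g w, v⟫_ℝ - β * ‖v‖ ^ 2 * t) t := by
    have := ((hasDerivAt_apply_add_smul hgrad w v t).sub
      ((hasDerivAt_id t).mul_const ⟪g w, v⟫_ℝ)).sub
      ((hasDerivAt_pow 2 t).const_mul (β / 2 * ‖v‖ ^ 2))
    refine this.congr_deriv ?_
    rw [inner_sub_left]
    simp only [one_mul, Nat.cast_ofNat, Nat.add_one_sub_one, pow_one, sub_right_inj]
    ring
  have hinner {t : ℝ} (ht : 0 ≤ t) : ⟪g (w + t • v) - g w, v⟫_ℝ ≤ β * ‖v‖ ^ 2 * t :=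
    calc ⟪g (w + t • v) - g w, v⟫_ℝ ≤ ‖g (w + t • v) - g w‖ * ‖v‖ := real_inner_le_norm _ _
      _ ≤ β * ‖(w + t • v) - w‖ * ‖v‖ := by gcongr; exact hglip _ _
      _ = β * ‖v‖ ^ 2 * t := by
        rw [add_sub_cancel_left, norm_smul, Real.norm_of_nonneg ht]; ring
  have hanti : AntitoneOn ψ (Set.Icc 0 1) :=
    antitoneOn_of_hasDerivWithinAt_nonpos (convex_Icc 0 1)
      (fun t _ => (hψ t).continuousAt.continuousWithinAt)
      (fun t _ => (hψ t).hasDerivWithinAt)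
      (fun t ht => by rw [interior_Icc] at ht; linarith [hinner ht.1.le])
  have h10 := hanti (by simp) (by simp) zero_le_one
  simp only [ψ, v, zero_smul, add_zero, one_smul, add_sub_cancel] at h10
  linarith

lemma sq_norm_gradient_le_of_nonneg_s9 (hβ : 0 < β) (hr0 : ∀ z, 0 ≤ r z)
    (hgrad : ∀ z, HasGradientAt r (g z) z) (hglip : ∀ z w, ‖g z - g w‖ ≤ β * ‖z - w‖) (w : H) :
    ‖g w‖ ^ 2 ≤ 2 * β * r w := by
  -- Compare `r w` with `0 ≤ r` at the gradient step `w - β⁻¹ • g w`.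
  have h := descent_lemma hgrad hglip w (w - β⁻¹ • g w)
  rw [sub_sub_cancel_left, inner_neg_right, real_inner_smul_right, real_inner_self_eq_norm_sq,
    norm_neg, norm_smul, Real.norm_of_nonneg (inv_nonneg.2 hβ.le)] at h
  have h0 := hr0 (w - β⁻¹ • g w)
  have e : β⁻¹ * ‖g w‖ ^ 2 - β / 2 * (β⁻¹ * ‖g w‖) ^ 2 = ‖g w‖ ^ 2 / (2 * β) := by
    field_simp; ring
  have key : ‖g w‖ ^ 2 / (2 * β) ≤ r w := by linarith
  rwa [div_le_iff₀ (by positivity), mul_comm] at key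

lemma le_one_add_mul_add_mul_sq_norm_sub (hβ : 0 < β) (hr0 : ∀ z, 0 ≤ r z)
    (hgrad : ∀ z, HasGradientAt r (g z) z) (hglip : ∀ z w, ‖g z - g w‖ ≤ β * ‖z - w‖)
    {lam₀ : ℝ} (hlam₀ : 0 < lam₀) (w z : H) :
    r z ≤ (1 + lam₀) * r w + (1 + 1 / lam₀) * (β / 2) * ‖z - w‖ ^ 2 := by
  have hdesc := descent_lemma hgrad hglip w z
  have hgrad_sq := sq_norm_gradient_le_of_nonneg_s9 hβ hr0 hgrad hglip w
  have hyoung := two_mul_le_mul_sq_add_sq_div (div_pos hlam₀ hβ) ‖g w‖ ‖z - w‖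
  have hinner : ⟪g w, z - w⟫_ℝ ≤ lam₀ * r w + β / (2 * lam₀) * ‖z - w‖ ^ 2 := by
    have e1 : lam₀ / β * ‖g w‖ ^ 2 ≤ lam₀ / β * (2 * β * r w) := by gcongr
    have e2 : lam₀ / β * (2 * β * r w) = 2 * (lam₀ * r w) := by field_simp
    have e3 : ‖z - w‖ ^ 2 / (lam₀ / β) = 2 * (β / (2 * lam₀) * ‖z - w‖ ^ 2) := by field_simp
    linarith [real_inner_le_norm (g w) (z - w)]
  have e : (1 + 1 / lam₀) * (β / 2) = β / (2 * lam₀) + β / 2 := by field_simp; ring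
  rw [e]
  linarith

end Smooth

lemma sq_norm_sub_le_of_lipschitz_in_each {E F G : Type*} [SeminormedAddCommGroup E]
    [SeminormedAddCommGroup F] [SeminormedAddCommGroup G] (f : E → F → G) {σx σu c : ℝ}
    (hfx : ∀ (a a' : E) (b : F), ‖f a b - f a' b‖ ≤ σx * ‖a - a'‖)
    (hfu : ∀ (a : E) (b b' : F), ‖f a b - f a b'‖ ≤ σu * ‖b - b'‖) (hc : 1 < c)
    (x x' : E) (u u' : F) :
    ‖f x u - f x' u'‖ ^ 2 ≤ c * σx ^ 2 * ‖x - x'‖ ^ 2 + c / (c - 1) * σu ^ 2 * ‖u - u'‖ ^ 2 :=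
  calc ‖f x u - f x' u'‖ ^ 2 ≤ (σx * ‖x - x'‖ + σu * ‖u - u'‖) ^ 2 := by
        gcongr
        calc ‖f x u - f x' u'‖ ≤ ‖f x u - f x' u‖ + ‖f x' u - f x' u'‖ :=
              norm_sub_le_norm_sub_add_norm_sub _ _ _
          _ ≤ _ := add_le_add (hfx x x' u) (hfu x' u u')
    _ ≤ c * (σx * ‖x - x'‖) ^ 2 + c / (c - 1) * (σu * ‖u - u'‖) ^ 2 :=
        add_sq_le_mul_sq_add_div_sub_one_mul_sq hc _ _
    _ = _ := by ring

lemma WithLp.sq_norm_equiv_symm_sub {E F : Type*} [SeminormedAddCommGroup E]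
    [SeminormedAddCommGroup F] (x x' : E) (u u' : F) :
    ‖(WithLp.equiv 2 (E × F)).symm (x, u) - (WithLp.equiv 2 (E × F)).symm (x', u')‖ ^ 2 =
      ‖x - x'‖ ^ 2 + ‖u - u'‖ ^ 2 :=
  WithLp.prod_norm_sq_eq_of_L2 _

theorem stmt9_general {E F : Type*}
    [NormedAddCommGroup E] [InnerProductSpace ℝ E] [CompleteSpace E]
    [NormedAddCommGroup F] [InnerProductSpace ℝ F] [CompleteSpace F]
    (r : WithLp 2 (E × F) → ℝ) (g : WithLp 2 (E × F) → WithLp 2 (E × F))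
    (f : E → F → E) (β σx σu lam lam₀ c q q' R Rdag : ℝ)
    (x xdag : E) (u udag : F)
    (hβ : 0 < β)
    (hr0 : ∀ z, 0 ≤ r z)
    (hgrad : ∀ z, HasGradientAt r (g z) z)
    (hglip : ∀ z w, ‖g z - g w‖ ≤ β * ‖z - w‖)
    (hfx : ∀ (a a' : E) (b : F), ‖f a b - f a' b‖ ≤ σx * ‖a - a'‖)
    (hfu : ∀ (a : E) (b b' : F), ‖f a b - f a b'‖ ≤ σu * ‖b - b'‖)
    (hlam₀ : 0 < lam₀) (hc : 1 < c)
    (hq' : 0 ≤ q')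
    (hqq : c * σx ^ 2 * q' + (1 + 1 / lam₀) * (β / 2) ≤ q)
    (hinv : R + q * ‖x - xdag‖ ^ 2 ≤ (1 + lam) * Rdag)
    (hu : ‖u - udag‖ ^ 2 ≤
      (lam - lam₀) * r ((WithLp.equiv 2 (E × F)).symm (xdag, udag)) /
        ((1 + 1 / lam₀) * (β / 2) + (c / (c - 1)) * σu ^ 2 * q')) :
    R + r ((WithLp.equiv 2 (E × F)).symm (x, u)) + q' * ‖f x u - f xdag udag‖ ^ 2
      ≤ (1 + lam) * (Rdag + r ((WithLp.equiv 2 (E × F)).symm (xdag, udag))) := by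
  have hr := le_one_add_mul_add_mul_sq_norm_sub hβ hr0 hgrad hglip hlam₀
    ((WithLp.equiv 2 (E × F)).symm (xdag, udag)) ((WithLp.equiv 2 (E × F)).symm (x, u))
  rw [WithLp.sq_norm_equiv_symm_sub] at hr
  have hf := mul_le_mul_of_nonneg_left
    (sq_norm_sub_le_of_lipschitz_in_each f hfx hfu hc x xdag u udag) hq'
  have hx := mul_le_mul_of_nonneg_right hqq (sq_nonneg ‖x - xdag‖)
  have hc' : 0 < c - 1 := sub_pos.2 hc
  rw [le_div_iff₀ (by positivity)] at hu
  linarith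

/-- Lemma D.1.
A sufficient closeness condition of the action `u` to the prior action `u†` implies
membership in the reservation-augmented safe set. -/
theorem stmt9 {E F : Type*}
    [NormedAddCommGroup E] [InnerProductSpace ℝ E] [CompleteSpace E]
    [NormedAddCommGroup F] [InnerProductSpace ℝ F] [CompleteSpace F]
    (r : WithLp 2 (E × F) → ℝ) (g : WithLp 2 (E × F) → WithLp 2 (E × F))
    (f : E → F → E) (β σx σu lam lam₀ c q q' R Rdag : ℝ)
    (x xdag : E) (u udag : F)
    (hβ : 0 < β) (hσx : 0 ≤ σx) (hσu : 0 ≤ σu)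
    (hr0 : ∀ z, 0 ≤ r z)
    (hconv : ConvexOn ℝ Set.univ r)
    (hgrad : ∀ z, HasGradientAt r (g z) z)
    (hglip : ∀ z w, ‖g z - g w‖ ≤ β * ‖z - w‖)
    (hfx : ∀ (a a' : E) (b : F), ‖f a b - f a' b‖ ≤ σx * ‖a - a'‖)
    (hfu : ∀ (a : E) (b b' : F), ‖f a b - f a b'‖ ≤ σu * ‖b - b'‖)
    (hlam₀ : 0 < lam₀) (hlam : lam₀ < lam) (hc : 1 < c)
    (hq : 0 ≤ q) (hq' : 0 ≤ q')
    (hqq : c * σx ^ 2 * q' + (1 + 1 / lam₀) * (β / 2) ≤ q)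
    (hinv : R + q * ‖x - xdag‖ ^ 2 ≤ (1 + lam) * Rdag)
    (hu : ‖u - udag‖ ^ 2 ≤
      (lam - lam₀) * r ((WithLp.equiv 2 (E × F)).symm (xdag, udag)) /
        ((1 + 1 / lam₀) * (β / 2) + (c / (c - 1)) * σu ^ 2 * q')) :
    R + r ((WithLp.equiv 2 (E × F)).symm (x, u)) + q' * ‖f x u - f xdag udag‖ ^ 2
      ≤ (1 + lam) * (Rdag + r ((WithLp.equiv 2 (E × F)).symm (xdag, udag))) :=
  stmt9_general r g f β σx σu lam lam₀ c q q' R Rdag x xdag u udag hβ hr0 hgrad hglip hfx hfu hlam₀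
    hc hq' hqq hinv hu
end
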